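/- arXiv:math/0408068 — 2 statements merged into one kernel-verified Lean document; each statement's English description precedes it below -/
import Mathlib

section
/- Let X be a stationary periodic process of period one, X : {k/2^n : 1 ≤ k ≤ 2^n} → ℤ/n, having at least one zero almost surely, and let F be a translation-invariant bounded functional of the path. Then E[F(X)] = 2^n E[F(X)/N(X) | X(0) = 0] P(X(0) = 0), where N(X) is the number of zeros of X. -/
open MeasureTheory Finset

/-- Discrete Rice-type formula: for a stationary process `X` on the cyclic lattice
`ZMod (2^n)` with values in `ℤ/n`, having at least one zero a.s., and a bounded,
measurable, translation-invariant functional `F`,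
`E[F(X)] = 2^n · E[F(X)/N(X) | X(0)=0] · P(X(0)=0)`, the right-hand side being written
as `2^n` times the integral of `F(X)/N(X)` over the event `{X(0) = 0}`. -/
theorem discrete_rice_formula (n : ℕ) (hn : 1 ≤ n)
    {Ω : Type*} [MeasurableSpace Ω] (P : Measure Ω) [IsProbabilityMeasure P]
    (X : Ω → ZMod (2 ^ n) → ℝ) (hX : Measurable X)
    (hvals : ∀ ω k, ∃ m : ℤ, X ω k = (m : ℝ) / n)
    (hstat : ∀ j : ZMod (2 ^ n),
      Measure.map (fun ω => fun k => X ω (k + j)) P = Measure.map X P)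
    (hzero : ∀ᵐ ω ∂P, ∃ k, X ω k = 0)
    (F : (ZMod (2 ^ n) → ℝ) → ℝ) (hF : Measurable F)
    (hFbdd : ∃ C, ∀ p, |F p| ≤ C)
    (hFinv : ∀ (p : ZMod (2 ^ n) → ℝ) (j : ZMod (2 ^ n)),
      F (fun k => p (k + j)) = F p)
    (N : Ω → ℕ)
    (hN : ∀ ω, N ω = (Finset.univ.filter fun k : ZMod (2 ^ n) => X ω k = 0).card) :
    ∫ ω, F (X ω) ∂P =
      (2 : ℝ) ^ n * ∫ ω in {ω | X ω 0 = 0}, F (X ω) / (N ω : ℝ) ∂P := by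
  haveI : NeZero (2 ^ n) := ⟨pow_ne_zero n two_ne_zero⟩
  obtain ⟨C, hC⟩ := hFbdd
  have hC0 : 0 ≤ C := le_trans (abs_nonneg _) (hC 0)
  -- number of zeros as a functional of the path
  set Nz : (ZMod (2 ^ n) → ℝ) → ℕ :=
    fun p => (Finset.univ.filter fun k => p k = 0).card with hNzdef
  have hNzmeas : Measurable Nz := by
    have : Nz = fun p => ∑ k : ZMod (2 ^ n), if p k = 0 then 1 else 0 := by
      funext p
      show (Finset.univ.filter fun k => p k = 0).card = _
      rw [Finset.card_filter]
    rw [this]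
    exact Finset.measurable_sum _ fun k _ =>
      Measurable.ite (measurableSet_eq_fun (measurable_pi_apply k) measurable_const)
        measurable_const measurable_const
  -- shift invariance of Nz
  have hNzshift : ∀ (p : ZMod (2 ^ n) → ℝ) (j : ZMod (2 ^ n)),
      Nz (fun k => p (k + j)) = Nz p := by
    intro p j
    exact Finset.card_equiv (Equiv.addRight j) (fun k => by simp)
  -- the key functional
  set g : (ZMod (2 ^ n) → ℝ) → ℝ :=
    fun p => if p 0 = 0 then F p / (Nz p : ℝ) else 0 with hgdef
  have hgmeas : Measurable g := by
    apply Measurable.ite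
    · exact measurableSet_eq_fun (measurable_pi_apply 0) measurable_const
    · exact hF.div (measurable_from_top.comp hNzmeas)
    · exact measurable_const
  have hdivbdd : ∀ p : ZMod (2 ^ n) → ℝ, |F p / (Nz p : ℝ)| ≤ C := by
    intro p
    rcases Nat.eq_zero_or_pos (Nz p) with h0 | h1
    · simp [h0, hC0]
    · rw [abs_div, Nat.abs_cast]
      refine le_trans (div_le_self (abs_nonneg _) ?_) (hC p)
      exact_mod_cast h1
  have hgbdd : ∀ p, |g p| ≤ C := by
    intro p
    by_cases h : p 0 = 0
    · simpa [hgdef, h] using hdivbdd p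
    · simp [hgdef, h, hC0]
  -- integrability of bounded measurable functions
  have hint : ∀ f : Ω → ℝ, Measurable f → (∀ ω, |f ω| ≤ C) → Integrable f P :=
    fun f hf hb => ⟨hf.aestronglyMeasurable,
      HasFiniteIntegral.of_bounded (C := C)
        (Filter.Eventually.of_forall fun ω => by simpa [Real.norm_eq_abs] using hb ω)⟩
  -- measurability of the shifted process
  have hXshift : ∀ k : ZMod (2 ^ n), Measurable (fun ω => fun m => X ω (m + k)) :=
    fun k => measurable_pi_lambda _ fun m => (measurable_pi_apply (m + k)).comp hX
  -- stationarity gives equality of integrals of g along shifts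
  have hshift : ∀ k : ZMod (2 ^ n),
      ∫ ω, g (fun m => X ω (m + k)) ∂P = ∫ ω, g (X ω) ∂P := by
    intro k
    rw [← integral_map (hXshift k).aemeasurable hgmeas.aestronglyMeasurable,
      hstat k, integral_map hX.aemeasurable hgmeas.aestronglyMeasurable]
  -- evaluate g on shifted paths
  have hgk : ∀ (p : ZMod (2 ^ n) → ℝ) (k : ZMod (2 ^ n)),
      g (fun m => p (m + k)) = if p k = 0 then F p / (Nz p : ℝ) else 0 := by
    intro p k
    simp only [hgdef, zero_add, hFinv p k, hNzshift p k]
  -- a.e. decomposition of F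
  have hsum : ∀ᵐ ω ∂P, F (X ω)
      = ∑ k : ZMod (2 ^ n), (if X ω k = 0 then F (X ω) / (Nz (X ω) : ℝ) else 0) := by
    filter_upwards [hzero] with ω hω
    obtain ⟨k0, hk0⟩ := hω
    have hNzpos : (0 : ℕ) < Nz (X ω) := by
      refine Finset.card_pos.mpr ⟨k0, ?_⟩
      simp [hNzdef, hk0]
    rw [← Finset.sum_filter, Finset.sum_const, nsmul_eq_mul]
    rw [show ((Finset.univ.filter fun k => X ω k = 0).card : ℝ) = (Nz (X ω) : ℝ) from rfl]
    rw [mul_div_cancel₀]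
    exact_mod_cast hNzpos.ne'
  -- each summand is integrable and has integral ∫ g(X)
  have hsummand : ∀ k : ZMod (2 ^ n),
      (fun ω => if X ω k = 0 then F (X ω) / (Nz (X ω) : ℝ) else 0)
        = fun ω => g (fun m => X ω (m + k)) := by
    intro k; funext ω; rw [hgk]
  have hintk : ∀ k : ZMod (2 ^ n),
      Integrable (fun ω => if X ω k = 0 then F (X ω) / (Nz (X ω) : ℝ) else 0) P := by
    intro k
    rw [hsummand k]
    exact hint _ (hgmeas.comp (hXshift k)) fun ω => by simpa using hgbdd (fun m => X ω (m + k))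
  have hmain : ∫ ω, F (X ω) ∂P = (2 : ℝ) ^ n * ∫ ω, g (X ω) ∂P := by
    rw [integral_congr_ae hsum, integral_finset_sum _ fun k _ => hintk k]
    have : ∀ k : ZMod (2 ^ n),
        ∫ ω, (if X ω k = 0 then F (X ω) / (Nz (X ω) : ℝ) else 0) ∂P
          = ∫ ω, g (X ω) ∂P := by
      intro k
      rw [hsummand k, hshift k]
    rw [Finset.sum_congr rfl fun k _ => this k, Finset.sum_const, nsmul_eq_mul]
    congr 1
    simp [ZMod.card]
  rw [hmain]
  congr 1
  -- identify ∫ g(X) with the restricted integral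
  have hS : MeasurableSet {ω | X ω 0 = 0} :=
    measurableSet_eq_fun ((measurable_pi_apply 0).comp hX) measurable_const
  rw [← integral_indicator hS]
  congr 1
  funext ω
  by_cases h : X ω 0 = 0 <;>
    simp [hgdef, Set.indicator, h, hN ω, hNzdef]
end

section
/- Consider the Euler–Lagrange relation (1/2)(f')^2 = (1/2)f^4 - f^2 - α f + (1/2)β for a minimizer f of I(f;a) = (1/2)∫_{-a}^a (1-f^2)^2 + (1/2)∫_{-a}^a (f')^2 over periodic mean-zero C^1 functions on [-a,a]. If I(f;a) ≤ 8/3 and ∫_{-a}^a f = 0, then |β - 1| ≤ (8/3)/a. -/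
open MeasureTheory intervalIntegral

/-- For a `C¹` periodic mean-zero minimizer `f` of `I(f;a)` satisfying the first
integral of the Euler–Lagrange equation
`(1/2)(f')² = (1/2)f⁴ - f² - α f + (1/2)β`, with `I(f;a) ≤ 8/3`, one has
`|β - 1| ≤ (8/3)/a`. -/
theorem EL_const_beta_close_to_one (a α β : ℝ) (ha : 0 < a) (f : ℝ → ℝ)
    (hf : ContDiff ℝ 1 f) (hper : Function.Periodic f (2 * a))
    (hmean : ∫ x in (-a)..a, f x = 0)
    (hEL : ∀ x, (1 / 2) * (deriv f x) ^ 2 =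
      (1 / 2) * (f x) ^ 4 - (f x) ^ 2 - α * f x + (1 / 2) * β)
    (hI : (1 / 2) * (∫ x in (-a)..a, (1 - f x ^ 2) ^ 2)
        + (1 / 2) * (∫ x in (-a)..a, (deriv f x) ^ 2) ≤ 8 / 3) :
    |β - 1| ≤ (8 / 3) / a := by
  have hcf : Continuous f := hf.continuous
  have hcd : Continuous (deriv f) := hf.continuous_deriv le_rfl
  have hle : (-a : ℝ) ≤ a := by linarith
  -- pointwise rewrite of the EL relation
  have h1 : ∀ x, (1 / 2) * (deriv f x) ^ 2 =
      (1 / 2) * (1 - f x ^ 2) ^ 2 + (-α) * f x + (β - 1) * (1 / 2) := by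
    intro x
    rw [hEL x]; ring
  -- integrability
  have i1 : IntervalIntegrable (fun x => (1 / 2) * (1 - f x ^ 2) ^ 2) volume (-a) a :=
    (Continuous.intervalIntegrable (by continuity) _ _)
  have i2 : IntervalIntegrable (fun x => (-α) * f x) volume (-a) a :=
    (Continuous.intervalIntegrable (by continuity) _ _)
  have i3 : IntervalIntegrable (fun _ : ℝ => (β - 1) * (1 / 2)) volume (-a) a :=
    intervalIntegrable_const
  -- integrate the relation
  have key : (1 / 2) * (∫ x in (-a)..a, (deriv f x) ^ 2)
      = (1 / 2) * (∫ x in (-a)..a, (1 - f x ^ 2) ^ 2) + (β - 1) * a := by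
    have := intervalIntegral.integral_congr (g := fun x =>
        (1 / 2) * (1 - f x ^ 2) ^ 2 + (-α) * f x + (β - 1) * (1 / 2))
        (μ := volume) (a := -a) (b := a) (f := fun x => (1 / 2) * (deriv f x) ^ 2)
        (fun x _ => h1 x)
    rw [intervalIntegral.integral_add (i1.add i2) i3,
        intervalIntegral.integral_add i1 i2,
        intervalIntegral.integral_const_mul, intervalIntegral.integral_const_mul,
        intervalIntegral.integral_const_mul, hmean, intervalIntegral.integral_const] at this
    rw [this]
    simp only [smul_eq_mul, mul_zero]
    ring
  have hA : 0 ≤ ∫ x in (-a)..a, (deriv f x) ^ 2 :=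
    intervalIntegral.integral_nonneg hle (fun x _ => sq_nonneg _)
  have hB : 0 ≤ ∫ x in (-a)..a, (1 - f x ^ 2) ^ 2 :=
    intervalIntegral.integral_nonneg hle (fun x _ => sq_nonneg _)
  rw [abs_le]
  constructor
  · rw [neg_le, show -(β - 1) = (1 - β) by ring, le_div_iff₀ ha]
    nlinarith
  · rw [le_div_iff₀ ha]
    nlinarith
end
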